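/- arXiv:1809.02196 — 4 statements merged into one kernel-verified Lean document; each statement's English description precedes it below -/
import Mathlib

section
/- Let K : ℝ → ℝ be even, bounded, continuous and Lebesgue integrable, with integrable Fourier transform 𝒦(ξ) = ∫_ℝ K(t) e^{−2πiξt} dt, and let α > 0. Then for all ξ, ξ' ∈ ℝ, the double integral ∬_{ℝ×ℝ} K(t−t') e^{−α t²} e^{−α t'²} e^{−2πi(ξ t − ξ' t')} dt dt' equals √(π/(2α)) · e^{−π²(ξ−ξ')²/(2α)} · ∫_ℝ 𝒦((ξ+ξ')/2 − u) · √(2π/α) e^{−2π² u²/α} du. (Proposition 1: covariance of the local spectrum of a stationary Gaussian process.) -/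
/-!
Fourier inversion writes `K (t - t') = ∫ 𝒦 u e^{2πiu(t - t')} du`, which splits the integrand into
`𝒦 u` times a modulated Gaussian in `t` at frequency `u - ξ` and one in `t'` at frequency
`ξ' - u`. Since `𝒦` is integrable and both factors are dominated by `e^{-α t²}`, Fubini lets us
integrate out `t'` and then `t`; each factor integrates to `√(π/α) e^{-π² η² / α}`, and
completing the square in `u` turns the product of these two Gaussians into a Gaussian centred at
`(ξ + ξ') / 2`.
-/

open MeasureTheory Real Complex FourierTransform

lemma fourier_eq_integral_mul_cexp (f : ℝ → ℂ) (ξ : ℝ) :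
    𝓕 f ξ = ∫ t : ℝ, f t * cexp (-2 * π * I * ξ * t) := by
  rw [Real.fourier_real_eq_integral_exp_smul]
  congr 1 with t
  rw [smul_eq_mul, mul_comm]
  push_cast
  ring_nf

lemma Continuous.integral_fourier_mul_cexp_eq {f : ℝ → ℂ} (hc : Continuous f)
    (hf : Integrable f) (hf' : Integrable (𝓕 f)) (x : ℝ) :
    ∫ u : ℝ, 𝓕 f u * cexp (2 * π * I * u * x) = f x := by
  rw [← congrFun (hc.fourierInv_fourier_eq hf hf') x, fourierInv_eq']
  congr 1 with u
  rw [smul_eq_mul, mul_comm]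
  congr 2
  rw [Real.inner_apply]
  push_cast
  ring

lemma integral_integral_mul_swap_of_norm_le {X Y : Type*} [MeasurableSpace X] [MeasurableSpace Y]
    {μ : Measure X} {ν : Measure Y} [SFinite μ] [SFinite ν] {g : X → ℂ} (hg : Integrable g μ)
    {h : X → Y → ℂ} (hh : AEStronglyMeasurable (Function.uncurry h) (μ.prod ν))
    {F : Y → ℝ} (hF : Integrable F ν) (h_le : ∀ x y, ‖h x y‖ ≤ F y) :
    ∫ y, ∫ x, g x * h x y ∂μ ∂ν = ∫ x, g x * ∫ y, h x y ∂ν ∂μ := by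
  have hint : Integrable (Function.uncurry fun x y => g x * h x y) (μ.prod ν) := by
    refine Integrable.mono' (hg.norm.mul_prod hF) (hg.aestronglyMeasurable.comp_fst.mul hh) ?_
    exact .of_forall fun p => (norm_mul_le _ _).trans
      (mul_le_mul_of_nonneg_left (h_le p.1 p.2) (norm_nonneg _))
  rw [← integral_integral_swap hint]
  simp_rw [integral_const_mul]

noncomputable def modGaussian (α η t : ℝ) : ℂ := Real.exp (-α * t ^ 2) * cexp (2 * π * I * η * t)

lemma norm_modGaussian (α η t : ℝ) : ‖modGaussian α η t‖ = Real.exp (-α * t ^ 2) := by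
  rw [modGaussian, norm_mul, Complex.norm_real, Real.norm_of_nonneg (Real.exp_pos _).le,
    show 2 * π * I * η * t = ((2 * π * η * t : ℝ) : ℂ) * I by push_cast; ring,
    Complex.norm_exp_ofReal_mul_I, mul_one]

@[fun_prop]
lemma continuous_modGaussian (α : ℝ) : Continuous (fun p : ℝ × ℝ => modGaussian α p.1 p.2) := by
  unfold modGaussian; fun_prop

lemma integral_modGaussian {α : ℝ} (hα : 0 < α) (η : ℝ) :
    ∫ t, modGaussian α η t = (Real.sqrt (π / α) * Real.exp (-π ^ 2 * η ^ 2 / α) : ℝ) := by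
  have := fourierIntegral_gaussian (b := α) (by simpa using hα) (2 * π * η)
  simp_rw [modGaussian, Complex.ofReal_mul, Complex.ofReal_exp]
  rw [Real.sqrt_eq_rpow, Complex.ofReal_cpow (by positivity)]
  convert this using 3 with t
  · rw [mul_comm]; push_cast; ring_nf
  · push_cast; ring
  · push_cast; ring
  · push_cast; field_simp; ring

lemma integral_integral_integral_mul_modGaussian {g : ℝ → ℂ} (hg : Integrable g) {α : ℝ}
    (hα : 0 < α) (ξ ξ' : ℝ) :
    ∫ t, ∫ t', ∫ u, g u * (modGaussian α (u - ξ) t * modGaussian α (ξ' - u) t') =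
      ∫ u, g u * ((Real.sqrt (π / α) * Real.exp (-π ^ 2 * (u - ξ) ^ 2 / α) : ℝ) *
        (Real.sqrt (π / α) * Real.exp (-π ^ 2 * (ξ' - u) ^ 2 / α) : ℝ)) := by
  have hG := integrable_exp_neg_mul_sq hα
  calc _ = ∫ t, ∫ u, g u * (modGaussian α (u - ξ) t *
        (Real.sqrt (π / α) * Real.exp (-π ^ 2 * (ξ' - u) ^ 2 / α) : ℝ)) := by
        congr 1 with t
        rw [integral_integral_mul_swap_of_norm_le hg
          (by fun_prop : Continuous _).aestronglyMeasurable hG]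
        · simp_rw [integral_const_mul, integral_modGaussian hα]
        · intro u t'
          rw [norm_mul, norm_modGaussian, norm_modGaussian]
          exact mul_le_of_le_one_left (Real.exp_pos _).le
            (Real.exp_le_one_iff.2 (by nlinarith [sq_nonneg t]))
    _ = _ := by
        rw [integral_integral_mul_swap_of_norm_le hg
          (by fun_prop : Continuous _).aestronglyMeasurable (hG.const_mul (Real.sqrt (π / α)))]
        · simp_rw [integral_mul_const, integral_modGaussian hα]
        · intro u t
          rw [norm_mul, norm_modGaussian, Complex.norm_real, mul_comm,
            Real.norm_of_nonneg (by positivity)]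
          gcongr
          refine mul_le_of_le_one_right (Real.sqrt_nonneg _) (Real.exp_le_one_iff.2 ?_)
          rw [neg_mul, neg_div]
          exact neg_nonpos.2 (by positivity)

lemma gaussian_mul_gaussian {α : ℝ} (hα : 0 < α) (ξ ξ' u : ℝ) :
    Real.sqrt (π / α) * Real.exp (-π ^ 2 * (u - ξ) ^ 2 / α) *
      (Real.sqrt (π / α) * Real.exp (-π ^ 2 * (ξ' - u) ^ 2 / α)) =
    Real.sqrt (π / (2 * α)) * Real.exp (-π ^ 2 * (ξ - ξ') ^ 2 / (2 * α)) *
      (Real.sqrt (2 * π / α) * Real.exp (-2 * π ^ 2 * ((ξ + ξ') / 2 - u) ^ 2 / α)) := by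
  have hsqrt : Real.sqrt (π / α) * Real.sqrt (π / α) =
      Real.sqrt (π / (2 * α)) * Real.sqrt (2 * π / α) := by
    rw [← Real.sqrt_mul (by positivity), ← Real.sqrt_mul (by positivity)]
    congr 1; field_simp
  have hexp : -π ^ 2 * (u - ξ) ^ 2 / α + -π ^ 2 * (ξ' - u) ^ 2 / α =
      -π ^ 2 * (ξ - ξ') ^ 2 / (2 * α) + -2 * π ^ 2 * ((ξ + ξ') / 2 - u) ^ 2 / α := by
    field_simp; ring
  calc _ = Real.sqrt (π / α) * Real.sqrt (π / α) *
        Real.exp (-π ^ 2 * (u - ξ) ^ 2 / α + -π ^ 2 * (ξ' - u) ^ 2 / α) := by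
        rw [Real.exp_add]; ring
    _ = _ := by rw [hsqrt, hexp, Real.exp_add]; ring

theorem local_spectrum_covariance_general
    (K : ℝ → ℝ) (𝒦 : ℝ → ℂ)
    (hCont : Continuous K)
    (hInt : Integrable K)
    (h𝒦 : ∀ ξ : ℝ, 𝒦 ξ = ∫ t : ℝ, (K t : ℂ) *
      Complex.exp (-2 * Real.pi * Complex.I * ξ * t))
    (h𝒦Int : Integrable 𝒦)
    (α : ℝ) (hα : 0 < α) (ξ ξ' : ℝ) :
    (∫ t : ℝ, ∫ t' : ℝ, (K (t - t') : ℂ) * Real.exp (-α * t ^ 2) *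
        Real.exp (-α * t' ^ 2) *
        Complex.exp (-2 * Real.pi * Complex.I * (ξ * t - ξ' * t')))
    = (Real.sqrt (Real.pi / (2 * α)) : ℂ) *
        Real.exp (-Real.pi ^ 2 * (ξ - ξ') ^ 2 / (2 * α)) *
      ∫ u : ℝ, 𝒦 ((ξ + ξ') / 2 - u) *
        (Real.sqrt (2 * Real.pi / α) * Real.exp (-2 * Real.pi ^ 2 * u ^ 2 / α)) := by
  have h𝓕 : 𝓕 (fun t => (K t : ℂ)) = 𝒦 := funext fun ξ => by
    rw [fourier_eq_integral_mul_cexp, h𝒦]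
  have hinv (x : ℝ) : ∫ u, 𝒦 u * cexp (2 * π * I * u * x) = K x := by
    rw [← h𝓕] at h𝒦Int ⊢
    exact (continuous_ofReal.comp hCont).integral_fourier_mul_cexp_eq hInt.ofReal h𝒦Int x
  calc _ = ∫ t, ∫ t', ∫ u, 𝒦 u * (modGaussian α (u - ξ) t * modGaussian α (ξ' - u) t') := by
        congr 1 with t; congr 1 with t'
        rw [← hinv, ← integral_mul_const, ← integral_mul_const, ← integral_mul_const]
        congr 1 with u
        have hphase :
            cexp (2 * π * I * u * (t - t' : ℝ)) * cexp (-2 * π * I * (ξ * t - ξ' * t')) =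
              cexp (2 * π * I * (u - ξ : ℝ) * t) * cexp (2 * π * I * (ξ' - u : ℝ) * t') := by
          rw [← Complex.exp_add, ← Complex.exp_add]; push_cast; ring_nf
        simp only [modGaussian]
        linear_combination (𝒦 u * Real.exp (-α * t ^ 2) * Real.exp (-α * t' ^ 2)) * hphase
    _ = ∫ u, 𝒦 u * ((Real.sqrt (π / (2 * α)) * Real.exp (-π ^ 2 * (ξ - ξ') ^ 2 / (2 * α)) : ℝ) *
          (Real.sqrt (2 * π / α) * Real.exp (-2 * π ^ 2 * ((ξ + ξ') / 2 - u) ^ 2 / α) : ℝ)) := by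
        rw [integral_integral_integral_mul_modGaussian h𝒦Int hα]
        simp_rw [← Complex.ofReal_mul, gaussian_mul_gaussian hα]
    _ = _ := by
        rw [← integral_sub_left_eq_self _ volume ((ξ + ξ') / 2), ← integral_const_mul]
        congr 1 with u
        rw [sub_sub_cancel]
        push_cast
        ring

/-- Proposition 1: the covariance of the local spectrum of a stationary Gaussian
process with kernel `K` and window `e^{-α t²}` equals a Gaussian-smoothed version of
the Fourier transform `𝒦` of `K`, evaluated at the mid-frequency `(ξ+ξ')/2`. -/
theorem local_spectrum_covariance
    (K : ℝ → ℝ) (𝒦 : ℝ → ℂ)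
    (hEven : ∀ t, K (-t) = K t)
    (hBdd : ∃ M, ∀ t, |K t| ≤ M)
    (hCont : Continuous K)
    (hInt : Integrable K)
    (h𝒦 : ∀ ξ : ℝ, 𝒦 ξ = ∫ t : ℝ, (K t : ℂ) *
      Complex.exp (-2 * Real.pi * Complex.I * ξ * t))
    (h𝒦Int : Integrable 𝒦)
    (α : ℝ) (hα : 0 < α) (ξ ξ' : ℝ) :
    (∫ t : ℝ, ∫ t' : ℝ, (K (t - t') : ℂ) * Real.exp (-α * t ^ 2) *
        Real.exp (-α * t' ^ 2) *
        Complex.exp (-2 * Real.pi * Complex.I * (ξ * t - ξ' * t')))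
    = (Real.sqrt (Real.pi / (2 * α)) : ℂ) *
        Real.exp (-Real.pi ^ 2 * (ξ - ξ') ^ 2 / (2 * α)) *
      ∫ u : ℝ, 𝒦 ((ξ + ξ') / 2 - u) *
        (Real.sqrt (2 * Real.pi / α) * Real.exp (-2 * Real.pi ^ 2 * u ^ 2 / α)) :=
  local_spectrum_covariance_general K 𝒦 hCont hInt h𝒦 h𝒦Int α hα ξ ξ'
end

section
/- Let Q ∈ ℕ, and for q = 1,…,Q let σ_q > 0, γ_q > 0, θ_q ∈ ℝ; define the spectral mixture kernel K(τ) = Σ_{q=1}^Q σ_q² e^{−γ_q τ²} cos(2π θ_q τ), and let α > 0. Then for all ξ, ξ' ∈ ℝ, ∬_{ℝ×ℝ} K(t−t') e^{−α t²} e^{−α t'²} e^{−2πi(ξ t − ξ' t')} dt dt' = Σ_{q=1}^Q Σ_{θ ∈ {θ_q, −θ_q}} (σ_q² π)/(2 √(α(α+2γ_q))) · e^{−π²(ξ−ξ')²/(2α)} · e^{−2π²((ξ+ξ')/2 − θ)²/(α+2γ_q)}. -/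
/-!
Writing `cos x = (e^{ix} + e^{-ix})/2` splits each spectral mixture component of the integrand
into two Gaussians `exp E(t, t')`, `E` a negative definite quadratic form plus an imaginary
linear part. Integrating first in `t'` and then in `t`, each time by completing the square,
gives `π / √(α(α + 2γ))` times the two exponentials in `ξ - ξ'` and `(ξ + ξ')/2 - θ`.
Exchanging the integrals with the finite sums is justified by integrability on `ℝ × ℝ`,
since `|exp E(t, t')| ≤ e^{-αt²} e^{-αt'²}`.
-/

open MeasureTheory Complex Real Function

section IteratedIntegral

variable {α β ι E : Type*} [MeasurableSpace α] [MeasurableSpace β] {μ : Measure α} {ν : Measure β}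
  [SFinite μ] [SFinite ν] [NormedAddCommGroup E] [NormedSpace ℝ E]

theorem integral_integral_add_of_integrable_uncurry {f g : α → β → E}
    (hf : Integrable (uncurry f) (μ.prod ν)) (hg : Integrable (uncurry g) (μ.prod ν)) :
    ∫ x, ∫ y, f x y + g x y ∂ν ∂μ = (∫ x, ∫ y, f x y ∂ν ∂μ) + ∫ x, ∫ y, g x y ∂ν ∂μ := by
  rw [integral_integral (hf.add hg), integral_integral hf, integral_integral hg]
  exact integral_add hf hg

theorem integral_integral_finsetSum (s : Finset ι) {f : ι → α → β → E}
    (hf : ∀ i ∈ s, Integrable (uncurry (f i)) (μ.prod ν)) :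
    ∫ x, ∫ y, ∑ i ∈ s, f i x y ∂ν ∂μ = ∑ i ∈ s, ∫ x, ∫ y, f i x y ∂ν ∂μ := by
  rw [integral_integral (integrable_finsetSum s hf)]
  refine (integral_finsetSum s hf).trans (Finset.sum_congr rfl fun i hi ↦ ?_)
  exact (integral_integral (hf i hi)).symm

end IteratedIntegral

lemma integral_cexp_neg_mul_sq_add_mul_add {r : ℝ} (hr : 0 < r) (c d : ℂ) :
    ∫ x : ℝ, cexp (-r * x ^ 2 + c * x + d) = (√(π / r) : ℂ) * cexp (d + c ^ 2 / (4 * r)) := by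
  have hr' : (r : ℂ) ≠ 0 := ofReal_ne_zero.2 hr.ne'
  rw [integral_cexp_quadratic (by simpa using hr) c d, neg_neg, Real.sqrt_eq_rpow,
    ofReal_cpow (by positivity)]
  push_cast
  congr 2
  field_simp
  ring

noncomputable def localSpectrumExponent (a g θ ξ ξ' t t' : ℝ) : ℂ :=
  -g * (t - t') ^ 2 + 2 * π * I * θ * (t - t') - a * t ^ 2 - a * t' ^ 2
    - 2 * π * I * (ξ * t - ξ' * t')

lemma integrable_cexp_localSpectrumExponent {a g : ℝ} (ha : 0 < a) (hg : 0 ≤ g)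
    (θ ξ ξ' : ℝ) :
    Integrable (uncurry fun t t' ↦ cexp (localSpectrumExponent a g θ ξ ξ' t t'))
      (volume.prod volume) := by
  refine ((integrable_exp_neg_mul_sq ha).mul_prod (integrable_exp_neg_mul_sq ha)).mono'
    (by unfold localSpectrumExponent; fun_prop) (ae_of_all _ fun ⟨t, t'⟩ ↦ ?_)
  rw [uncurry_apply_pair, norm_exp, ← Real.exp_add]
  refine Real.exp_le_exp.2 ?_
  simp only [localSpectrumExponent, sq, neg_mul, sub_re, add_re, neg_re, mul_re, ofReal_re,
    sub_im, ofReal_im, sub_self, mul_zero, sub_zero, mul_im, zero_mul, add_zero, re_ofNat, im_ofNat,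
    I_re, I_im, mul_one, zero_add]
  nlinarith [mul_nonneg hg (sq_nonneg (t - t'))]

lemma integral_cexp_localSpectrumExponent_snd {a g : ℝ} (hag : 0 < a + g) (θ ξ ξ' t : ℝ) :
    ∫ t', cexp (localSpectrumExponent a g θ ξ ξ' t t')
      = (√(π / (a + g)) : ℂ) * cexp (-(a * (a + 2 * g) / (a + g) : ℝ) * t ^ 2
          + ((2 * π * (a * θ - (a + g) * ξ + g * ξ') / (a + g) : ℝ) * I) * t
          + (-π ^ 2 * (ξ' - θ) ^ 2 / (a + g) : ℝ)) := by
  have hquad : ∀ t', localSpectrumExponent a g θ ξ ξ' t t'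
      = -(a + g : ℝ) * t' ^ 2 + (2 * g * t + (2 * π * (ξ' - θ) : ℝ) * I) * t'
        + (-(a + g) * t ^ 2 + 2 * π * I * (θ - ξ) * t) := by
    intro t'; unfold localSpectrumExponent; push_cast; ring
  simp_rw [hquad]
  rw [integral_cexp_neg_mul_sq_add_mul_add hag]
  congr 2
  have hag' : (a : ℂ) + g ≠ 0 := by exact_mod_cast hag.ne'
  push_cast
  field_simp
  linear_combination (4 * π ^ 2 * (ξ' - θ) ^ 2) * I_sq

lemma integral_integral_cexp_localSpectrumExponent {a g : ℝ} (ha : 0 < a) (hag : 0 < a + 2 * g)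
    (θ ξ ξ' : ℝ) :
    ∫ t, ∫ t', cexp (localSpectrumExponent a g θ ξ ξ' t t')
      = ((π / √(a * (a + 2 * g)) * Real.exp (-π ^ 2 * (ξ - ξ') ^ 2 / (2 * a))
          * Real.exp (-2 * π ^ 2 * ((ξ + ξ') / 2 - θ) ^ 2 / (a + 2 * g)) : ℝ) : ℂ) := by
  have hag₁ : 0 < a + g := by linarith
  have hr : 0 < a * (a + 2 * g) / (a + g) := by positivity
  simp_rw [integral_cexp_localSpectrumExponent_snd hag₁]
  rw [integral_const_mul, integral_cexp_neg_mul_sq_add_mul_add hr]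
  have hsqrt : √(π / (a + g)) * √(π / (a * (a + 2 * g) / (a + g))) = π / √(a * (a + 2 * g)) := by
    rw [← Real.sqrt_mul (by positivity),
      show π / (a + g) * (π / (a * (a + 2 * g) / (a + g))) = π ^ 2 / (a * (a + 2 * g)) by
        field_simp,
      Real.sqrt_div (sq_nonneg π), Real.sqrt_sq pi_pos.le]
  have hexp : ((-π ^ 2 * (ξ' - θ) ^ 2 / (a + g) : ℝ) : ℂ)
      + ((2 * π * (a * θ - (a + g) * ξ + g * ξ') / (a + g) : ℝ) * I) ^ 2
        / (4 * (a * (a + 2 * g) / (a + g) : ℝ))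
      = ((-π ^ 2 * (ξ - ξ') ^ 2 / (2 * a) + -2 * π ^ 2 * ((ξ + ξ') / 2 - θ) ^ 2 / (a + 2 * g) : ℝ)
          : ℂ) := by
    have hreal : -π ^ 2 * (ξ' - θ) ^ 2 / (a + g)
        + (2 * π * (a * θ - (a + g) * ξ + g * ξ') / (a + g)) ^ 2 * -1
          / (4 * (a * (a + 2 * g) / (a + g)))
        = -π ^ 2 * (ξ - ξ') ^ 2 / (2 * a) + -2 * π ^ 2 * ((ξ + ξ') / 2 - θ) ^ 2 / (a + 2 * g) := by
      -- `field_simp` rewrites `a + 2 * g` as `a + g * 2` before looking for this hypothesis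
      have : a + g * 2 ≠ 0 := by linarith
      field_simp
      ring
    rw [mul_pow, I_sq]
    exact_mod_cast hreal
  rw [← mul_assoc, ← ofReal_mul, hsqrt, hexp, ofReal_add, Complex.exp_add]
  push_cast
  ring

lemma ofReal_mul_cos_mul_window_eq_cexp_add_cexp {s a g θ ξ ξ' t t' : ℝ} :
    ((s * Real.exp (-g * (t - t') ^ 2) * Real.cos (2 * π * θ * (t - t')) : ℝ) : ℂ)
        * Real.exp (-a * t ^ 2) * Real.exp (-a * t' ^ 2) * cexp (-2 * π * I * (ξ * t - ξ' * t'))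
      = s / 2 * cexp (localSpectrumExponent a g θ ξ ξ' t t')
        + s / 2 * cexp (localSpectrumExponent a g (-θ) ξ ξ' t t') := by
  set base : ℂ := ((-g * (t - t') ^ 2 : ℝ) : ℂ) + ((-a * t ^ 2 : ℝ) : ℂ) + ((-a * t' ^ 2 : ℝ) : ℂ)
    + -2 * π * I * (ξ * t - ξ' * t')
  have hplus : localSpectrumExponent a g θ ξ ξ' t t'
      = ((2 * π * θ * (t - t') : ℝ) : ℂ) * I + base := by
    simp only [localSpectrumExponent, base]; push_cast; ring
  have hminus : localSpectrumExponent a g (-θ) ξ ξ' t t'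
      = -((2 * π * θ * (t - t') : ℝ) : ℂ) * I + base := by
    simp only [localSpectrumExponent, base]; push_cast; ring
  rw [hplus, hminus, Complex.exp_add, Complex.exp_add]
  simp only [base, Complex.exp_add]
  rw [ofReal_mul, ofReal_mul, ofReal_cos, ofReal_exp, ofReal_exp, ofReal_exp, Complex.cos]
  ring

theorem local_spectrum_covariance_sm_kernel_general
    (Q : ℕ) (σ γ θ : Fin Q → ℝ)
    (hγ : ∀ q, 0 < γ q)
    (α : ℝ) (hα : 0 < α) (ξ ξ' : ℝ) :
    (∫ t : ℝ, ∫ t' : ℝ,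
        ((∑ q, σ q ^ 2 * Real.exp (-γ q * (t - t') ^ 2) *
            Real.cos (2 * Real.pi * θ q * (t - t')) : ℝ) : ℂ) *
        Real.exp (-α * t ^ 2) * Real.exp (-α * t' ^ 2) *
        Complex.exp (-2 * Real.pi * Complex.I * (ξ * t - ξ' * t')))
    = ∑ q, ((((σ q ^ 2 * Real.pi) / (2 * Real.sqrt (α * (α + 2 * γ q))) *
          Real.exp (-Real.pi ^ 2 * (ξ - ξ') ^ 2 / (2 * α)) *
          Real.exp (-2 * Real.pi ^ 2 * ((ξ + ξ') / 2 - θ q) ^ 2 / (α + 2 * γ q)) : ℝ) : ℂ) +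
        (((σ q ^ 2 * Real.pi) / (2 * Real.sqrt (α * (α + 2 * γ q))) *
          Real.exp (-Real.pi ^ 2 * (ξ - ξ') ^ 2 / (2 * α)) *
          Real.exp (-2 * Real.pi ^ 2 * ((ξ + ξ') / 2 - (-θ q)) ^ 2 / (α + 2 * γ q)) : ℝ) : ℂ)) := by
  set E : Fin Q → ℝ → ℝ → ℝ → ℂ := fun q θ' t t' ↦
    cexp (localSpectrumExponent α (γ q) θ' ξ ξ' t t')
  have hint q θ' (c : ℂ) : Integrable (uncurry fun t t' ↦ c * E q θ' t t') (volume.prod volume) :=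
    (integrable_cexp_localSpectrumExponent hα (hγ q).le θ' ξ ξ').const_mul c
  calc _ = ∫ t, ∫ t', ∑ q, (((σ q ^ 2 : ℝ) : ℂ) / 2 * E q (θ q) t t'
          + ((σ q ^ 2 : ℝ) : ℂ) / 2 * E q (-θ q) t t') := by
        simp_rw [ofReal_sum, Finset.sum_mul, ofReal_mul_cos_mul_window_eq_cexp_add_cexp, E]
    _ = ∑ q, (((σ q ^ 2 : ℝ) : ℂ) / 2 * (∫ t, ∫ t', E q (θ q) t t')
          + ((σ q ^ 2 : ℝ) : ℂ) / 2 * ∫ t, ∫ t', E q (-θ q) t t') := by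
        rw [integral_integral_finsetSum _ fun q _ ↦ (hint q _ _).add (hint q _ _)]
        refine Finset.sum_congr rfl fun q _ ↦ ?_
        rw [integral_integral_add_of_integrable_uncurry (hint q _ _) (hint q _ _)]
        simp_rw [integral_const_mul]
    _ = _ := by
        refine Finset.sum_congr rfl fun q _ ↦ ?_
        have hαγ : 0 < α + 2 * γ q := by linarith [hγ q]
        simp only [E]
        rw [integral_integral_cexp_localSpectrumExponent hα hαγ,
          integral_integral_cexp_localSpectrumExponent hα hαγ]
        push_cast
        ring

/-- Closed form of the local-spectrum covariance `K_F(ξ,ξ')` for the spectral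
mixture kernel `K(τ) = Σ_q σ_q² e^{−γ_q τ²} cos(2πθ_q τ)`: a sum, over the
components `q` and over `θ ∈ {θ_q, −θ_q}`, of Gaussian factors in `ξ−ξ'` and in
the mid-frequency `(ξ+ξ')/2 − θ`. -/
theorem local_spectrum_covariance_sm_kernel
    (Q : ℕ) (σ γ θ : Fin Q → ℝ)
    (hσ : ∀ q, 0 < σ q) (hγ : ∀ q, 0 < γ q)
    (α : ℝ) (hα : 0 < α) (ξ ξ' : ℝ) :
    (∫ t : ℝ, ∫ t' : ℝ,
        ((∑ q, σ q ^ 2 * Real.exp (-γ q * (t - t') ^ 2) *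
            Real.cos (2 * Real.pi * θ q * (t - t')) : ℝ) : ℂ) *
        Real.exp (-α * t ^ 2) * Real.exp (-α * t' ^ 2) *
        Complex.exp (-2 * Real.pi * Complex.I * (ξ * t - ξ' * t')))
    = ∑ q, ((((σ q ^ 2 * Real.pi) / (2 * Real.sqrt (α * (α + 2 * γ q))) *
          Real.exp (-Real.pi ^ 2 * (ξ - ξ') ^ 2 / (2 * α)) *
          Real.exp (-2 * Real.pi ^ 2 * ((ξ + ξ') / 2 - θ q) ^ 2 / (α + 2 * γ q)) : ℝ) : ℂ) +
        (((σ q ^ 2 * Real.pi) / (2 * Real.sqrt (α * (α + 2 * γ q))) *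
          Real.exp (-Real.pi ^ 2 * (ξ - ξ') ^ 2 / (2 * α)) *
          Real.exp (-2 * Real.pi ^ 2 * ((ξ + ξ') / 2 - (-θ q)) ^ 2 / (α + 2 * γ q)) : ℝ) : ℂ)) :=
  local_spectrum_covariance_sm_kernel_general Q σ γ θ hγ α hα ξ ξ'
end

section
/- Let σ > 0, γ > 0, θ₀ ∈ ℝ, α > 0, and define K(τ) = σ² e^{−γ τ²} cos(2π θ₀ τ). Then for all t, ξ ∈ ℝ, ∫_ℝ K(t − s) e^{−α s²} e^{−2πiξs} ds = Σ_{θ ∈ {θ₀, −θ₀}} (σ²/2) √(π/(α+γ)) · e^{−αγ t²/(α+γ)} · e^{−π²(ξ+θ)²/(α+γ)} · e^{2πi t (θα − γξ)/(α+γ)}. -/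
open MeasureTheory Complex
open scoped Real

/-!
Writing `cos x = (e^{ix} + e^{-ix}) / 2` splits the integrand into two terms, one for each of
`θ = ±θ₀`. Each is the exponential of a complex quadratic in `s` with leading coefficient
`-(α + γ)`, so completing the square (`integral_cexp_quadratic`) evaluates it.
-/

lemma ofReal_cpow_one_half {x : ℝ} (hx : 0 ≤ x) : (x : ℂ) ^ (1 / 2 : ℂ) = √x := by
  rw [Real.sqrt_eq_rpow, ofReal_cpow hx]
  norm_num

section GaussianProduct

variable (γ α t θ ξ : ℝ)

lemma gaussianProduct_exponent_eq (s : ℝ) :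
    (-γ * (t - s) ^ 2 - α * s ^ 2 + 2 * π * I * θ * (t - s) - 2 * π * I * ξ * s : ℂ) =
      -(α + γ : ℂ) * s ^ 2 + (2 * γ * t - 2 * π * I * (θ + ξ)) * s +
        (-γ * t ^ 2 + 2 * π * I * θ * t) := by
  ring

variable {γ α}

lemma integrable_cexp_gaussianProduct (h : 0 < α + γ) :
    Integrable fun s : ℝ =>
      cexp (-γ * (t - s) ^ 2 - α * s ^ 2 + 2 * π * I * θ * (t - s) - 2 * π * I * ξ * s) := by
  simp_rw [gaussianProduct_exponent_eq]
  exact integrable_cexp_quadratic' (by simp only [neg_re, add_re, ofReal_re]; linarith) _ _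

lemma integral_cexp_gaussianProduct (h : 0 < α + γ) :
    ∫ s : ℝ, cexp (-γ * (t - s) ^ 2 - α * s ^ 2 + 2 * π * I * θ * (t - s) - 2 * π * I * ξ * s) =
      √(π / (α + γ)) * Real.exp (-α * γ * t ^ 2 / (α + γ)) *
        Real.exp (-π ^ 2 * (ξ + θ) ^ 2 / (α + γ)) *
        cexp (2 * π * I * t * ((θ * α - γ * ξ) / (α + γ))) := by
  have hne : (α + γ : ℂ) ≠ 0 := by exact_mod_cast h.ne'
  simp_rw [gaussianProduct_exponent_eq]
  rw [integral_cexp_quadratic (by simp only [neg_re, add_re, ofReal_re]; linarith), neg_neg,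
    show (π / (α + γ : ℂ)) = (π / (α + γ) : ℝ) by push_cast; ring,
    ofReal_cpow_one_half (by positivity)]
  simp only [ofReal_exp, mul_assoc, ← Complex.exp_add]
  congr 2
  push_cast
  field_simp
  ring_nf
  rw [I_sq]
  ring

lemma smComponent_integrand_eq (σ s : ℝ) :
    ((σ ^ 2 * Real.exp (-γ * (t - s) ^ 2) * Real.cos (2 * π * θ * (t - s)) : ℝ) : ℂ) *
        Real.exp (-α * s ^ 2) * cexp (-2 * π * I * ξ * s) =
      σ ^ 2 / 2 *
        (cexp (-γ * (t - s) ^ 2 - α * s ^ 2 + 2 * π * I * θ * (t - s) - 2 * π * I * ξ * s) +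
          cexp (-γ * (t - s) ^ 2 - α * s ^ 2 + 2 * π * I * (-θ : ℝ) * (t - s) - 2 * π * I * ξ * s)) := by
  calc _ = σ ^ 2 / 2 * cexp (-γ * (t - s) ^ 2) * cexp (-α * s ^ 2) * cexp (-2 * π * I * ξ * s) *
        (2 * Complex.cos (2 * π * θ * (t - s))) := by push_cast; ring
    _ = σ ^ 2 / 2 * (cexp (-γ * (t - s) ^ 2) * cexp (-α * s ^ 2) * cexp (2 * π * θ * (t - s) * I) *
          cexp (-2 * π * I * ξ * s) + cexp (-γ * (t - s) ^ 2) * cexp (-α * s ^ 2) *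
          cexp (-(2 * π * θ * (t - s)) * I) * cexp (-2 * π * I * ξ * s)) := by rw [two_cos]; ring
    _ = _ := by simp only [← Complex.exp_add]; congr 3 <;> push_cast <;> ring

end GaussianProduct

theorem cross_covariance_sm_component_general
    (σ γ θ₀ α : ℝ) (hγ : 0 < γ) (hα : 0 < α) (t ξ : ℝ) :
    (∫ s : ℝ, ((σ ^ 2 * Real.exp (-γ * (t - s) ^ 2) *
          Real.cos (2 * Real.pi * θ₀ * (t - s)) : ℝ) : ℂ) *
        Real.exp (-α * s ^ 2) *
        Complex.exp (-2 * Real.pi * Complex.I * ξ * s))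
    = (((σ ^ 2 / 2 * Real.sqrt (Real.pi / (α + γ)) *
          Real.exp (-α * γ * t ^ 2 / (α + γ)) *
          Real.exp (-Real.pi ^ 2 * (ξ + θ₀) ^ 2 / (α + γ)) : ℝ) : ℂ) *
        Complex.exp (2 * Real.pi * Complex.I * t * ((θ₀ * α - γ * ξ) / (α + γ))) +
       ((σ ^ 2 / 2 * Real.sqrt (Real.pi / (α + γ)) *
          Real.exp (-α * γ * t ^ 2 / (α + γ)) *
          Real.exp (-Real.pi ^ 2 * (ξ + (-θ₀)) ^ 2 / (α + γ)) : ℝ) : ℂ) *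
        Complex.exp (2 * Real.pi * Complex.I * t * (((-θ₀) * α - γ * ξ) / (α + γ)))) := by
  have h : 0 < α + γ := by linarith
  simp_rw [smComponent_integrand_eq]
  rw [integral_const_mul, integral_add (integrable_cexp_gaussianProduct t θ₀ ξ h)
      (integrable_cexp_gaussianProduct t (-θ₀) ξ h),
    integral_cexp_gaussianProduct t θ₀ ξ h, integral_cexp_gaussianProduct t (-θ₀) ξ h]
  push_cast
  ring

/-- Closed form of the cross-covariance `K_{yF}(t,ξ) = ∫ K(t−s) e^{−αs²} e^{−2πiξs} ds`
for a single spectral-mixture component `K(τ) = σ² e^{−γτ²} cos(2πθ₀τ)`: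
a sum over `θ ∈ {θ₀, −θ₀}` of Gaussian-modulated complex exponentials. -/
theorem cross_covariance_sm_component
    (σ γ θ₀ α : ℝ) (hσ : 0 < σ) (hγ : 0 < γ) (hα : 0 < α) (t ξ : ℝ) :
    (∫ s : ℝ, ((σ ^ 2 * Real.exp (-γ * (t - s) ^ 2) *
          Real.cos (2 * Real.pi * θ₀ * (t - s)) : ℝ) : ℂ) *
        Real.exp (-α * s ^ 2) *
        Complex.exp (-2 * Real.pi * Complex.I * ξ * s))
    = (((σ ^ 2 / 2 * Real.sqrt (Real.pi / (α + γ)) *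
          Real.exp (-α * γ * t ^ 2 / (α + γ)) *
          Real.exp (-Real.pi ^ 2 * (ξ + θ₀) ^ 2 / (α + γ)) : ℝ) : ℂ) *
        Complex.exp (2 * Real.pi * Complex.I * t * ((θ₀ * α - γ * ξ) / (α + γ))) +
       ((σ ^ 2 / 2 * Real.sqrt (Real.pi / (α + γ)) *
          Real.exp (-α * γ * t ^ 2 / (α + γ)) *
          Real.exp (-Real.pi ^ 2 * (ξ + (-θ₀)) ^ 2 / (α + γ)) : ℝ) : ℂ) *
        Complex.exp (2 * Real.pi * Complex.I * t * (((-θ₀) * α - γ * ξ) / (α + γ)))) :=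
  cross_covariance_sm_component_general σ γ θ₀ α hγ hα t ξ
end

section
/- Let N ∈ ℕ, t₁,…,t_N ∈ ℝ, y₁,…,y_N ∈ ℝ, and ξ ∈ ℝ. Then, as α → 0⁺, Σ_{i=1}^N y_i ∫_ℝ e^{−2πi(ξ−u) t_i} √(π/α) e^{−π² u²/α} du converges to the discrete-time Fourier transform Σ_{i=1}^N y_i e^{−2πiξ t_i}. (Model consistency: with an uninformative prior K(𝐭,𝐭) = I and 𝒦 ≡ 1, the posterior mean of the local spectrum converges to the discrete-time Fourier transform of the observations as the window becomes infinitely wide.) -/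
open MeasureTheory Filter Complex Real Topology

/-!
The Gaussian window `√(π/α) e^{-π²u²/α}` is a probability density whose Fourier transform is
`e^{-α τ²}`. Convolving the DTFT kernel `e^{-2πiξτ}` with it therefore only damps each term of
the sum by `e^{-α t_i²}`, and these factors tend to `1` as `α → 0⁺`.
-/

lemma integral_cexp_mul_normalized_gaussian {b : ℝ} (hb : 0 < b) (t : ℝ) :
    ∫ u : ℝ, cexp (I * t * u) * ((√(b / π) * rexp (-b * u ^ 2) : ℝ) : ℂ) =
      cexp (-t ^ 2 / (4 * b)) := by
  have hcpow : ((π : ℂ) / b) ^ (1 / 2 : ℂ) = ((√(π / b) : ℝ) : ℂ) := by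
    rw [sqrt_eq_rpow, ofReal_cpow (div_pos pi_pos hb).le]
    push_cast
    rfl
  have hnorm : √(b / π) * √(π / b) = 1 := by
    rw [← sqrt_mul (div_pos hb pi_pos).le, div_mul_div_comm, mul_comm b,
      div_self (by positivity), Real.sqrt_one]
  calc ∫ u : ℝ, cexp (I * t * u) * ((√(b / π) * rexp (-b * u ^ 2) : ℝ) : ℂ)
      = (√(b / π) : ℂ) * ∫ u : ℝ, cexp (I * t * u) * cexp (-(b : ℂ) * u ^ 2) := by
        rw [← integral_const_mul]
        congr 1 with u
        push_cast
        ring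
    _ = cexp (-t ^ 2 / (4 * b)) := by
        rw [fourierIntegral_gaussian (by simpa using hb), hcpow, ← mul_assoc, ← ofReal_mul, hnorm,
          ofReal_one, one_mul]

lemma integral_dtft_kernel_mul_gaussian_window {α : ℝ} (hα : 0 < α) (ξ τ : ℝ) :
    ∫ u : ℝ, cexp (-2 * π * I * (ξ - u) * τ) *
        ((√(π / α) * rexp (-π ^ 2 * u ^ 2 / α) : ℝ) : ℂ) =
      cexp (-2 * π * I * ξ * τ) * cexp (-α * τ ^ 2) := by
  have hb : 0 < π ^ 2 / α := by positivity
  have fourier := integral_cexp_mul_normalized_gaussian hb (2 * π * τ)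
  rw [show π ^ 2 / α / π = π / α by field_simp] at fourier
  calc _ = ∫ u : ℝ, cexp (-2 * π * I * ξ * τ) * (cexp (I * ↑(2 * π * τ) * u) *
          ((√(π / α) * rexp (-(π ^ 2 / α) * u ^ 2) : ℝ) : ℂ)) := by
        congr 1 with u
        rw [← mul_assoc, ← Complex.exp_add]
        congr 3
        · push_cast; ring
        · congr 1; ring
    _ = _ := by
        rw [integral_const_mul, fourier]
        congr 2
        push_cast
        field_simp
        ring

/-- Model consistency: with an uninformative prior (`K(𝐭,𝐭) = I`, `𝒦 ≡ 1`), the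
posterior mean of the local spectrum converges, as the window becomes infinitely
wide (`α → 0⁺`), to the discrete-time Fourier transform of the observations. -/
theorem posterior_mean_tendsto_dtft
    (N : ℕ) (t y : Fin N → ℝ) (ξ : ℝ) :
    Tendsto (fun α : ℝ => ∑ i, (y i : ℂ) *
        ∫ u : ℝ, Complex.exp (-2 * Real.pi * Complex.I * (ξ - u) * t i) *
          ((Real.sqrt (Real.pi / α) * Real.exp (-Real.pi ^ 2 * u ^ 2 / α) : ℝ) : ℂ))
      (nhdsWithin 0 (Set.Ioi 0))
      (nhds (∑ i, (y i : ℂ) * Complex.exp (-2 * Real.pi * Complex.I * ξ * t i))) := by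
  have damping (τ : ℝ) : Tendsto (fun α : ℝ => cexp (-α * τ ^ 2)) (𝓝[>] 0) (𝓝 1) := by
    have hcont : Continuous (fun α : ℝ => cexp (-α * τ ^ 2)) := by fun_prop
    simpa using (hcont.tendsto 0).mono_left nhdsWithin_le_nhds
  have damped := tendsto_finsetSum Finset.univ fun i _ =>
    ((damping (t i)).const_mul (cexp (-2 * π * I * ξ * t i))).const_mul (y i : ℂ)
  simp only [mul_one] at damped
  refine damped.congr' ?_
  filter_upwards [self_mem_nhdsWithin] with α (hα : 0 < α)
  simp_rw [integral_dtft_kernel_mul_gaussian_window hα]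
end
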